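/- For every real ε with 0 < ε < 1 there exists a constant C > 0 such that for every integer n ≥ 2 there is a nonempty set S ⊆ {1, 2, ..., n−1} with the following properties: (i) S is symmetric, i.e., s ∈ S if and only if n − s ∈ S; (ii) |S| ≤ C · log₂ n; and (iii) for every k ∈ {1, 2, ..., n−1}, |Σ_{s ∈ S} exp(2πi·k·s/n)| ≤ max(ε, 1/(n−1)) · |S|. (Such an S defines an undirected simple d-regular circulant graph G_n on n vertices with d = |S|, whose adjacency-matrix eigenvalues other than d are exactly the sums Σ_{s ∈ S} exp(2πi·k·s/n) for k = 1, ..., n−1; thus λ(G_n) ≤ max(ε, 1/(n−1)) · d.) -/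

import Mathlib

/-!
Alon–Roichman for cyclic groups, by counting. Choose `s₁, …, s_d ∈ {1, …, n-1}` and put
`S = {sᵢ} ∪ {n - sᵢ}`. If no `sᵢ + sⱼ = n` and the `sᵢ` are distinct, then `|S| = 2d` and the
eigenvalue at `k` is `2 ∑ᵢ cos (2πk sᵢ/n)`, a sum of `d` independent bounded terms whose mean
`-2/(n-1)` is tiny because the cosines over all of `{1, …, n-1}` sum to `-1`. A Chernoff bound
(exponential moment plus Markov, with parameter `ε/2`) shows that `|∑ᵢ cos| > εd` for at most
`2 e^{-dε²/8}` of the tuples at each `k`; with `d = ⌈16 log n / ε²⌉` this is at most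
`1/(2(n-1))`, so over all `k` at most half of the tuples are bad, while tuples with a collision
are at most `2d²/(n-1) ≤ 1/4` of them. For the finitely many `n` too small for these estimates,
`S = {1, …, n-1}` works: all its nontrivial eigenvalues equal `-1`.
-/

open Finset Real Filter Asymptotics
open Complex (I)

lemma sum_range_exp_eq_zero {n k : ℕ} (hk0 : 0 < k) (hkn : k < n) :
    ∑ s ∈ range n, Complex.exp (2 * π * I * k * s / n) = 0 := by
  set ζ := Complex.exp (2 * π * I / n)
  have hζ : IsPrimitiveRoot ζ n := Complex.isPrimitiveRoot_exp n (by omega)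
  have hpow (s : ℕ) : Complex.exp (2 * π * I * k * s / n) = (ζ ^ k) ^ s := by
    rw [← pow_mul, ← Complex.exp_nat_mul]; push_cast; ring_nf
  have hne : ζ ^ k ≠ 1 := hζ.pow_ne_one_of_pos_of_lt hk0.ne' hkn
  simp_rw [hpow, geom_sum_eq hne, ← pow_mul, mul_comm k, pow_mul, hζ.pow_eq_one, one_pow,
    sub_self, zero_div]

lemma sum_Ioo_exp_eq_neg_one {n k : ℕ} (hk0 : 0 < k) (hkn : k < n) :
    ∑ s ∈ Ioo 0 n, Complex.exp (2 * π * I * k * s / n) = -1 := by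
  have hIoo : Ioo 0 n = (range n).erase 0 := by
    ext s; simp [Nat.pos_iff_ne_zero, and_comm]
  rw [hIoo, sum_erase_eq_sub (mem_range.mpr (by omega)), sum_range_exp_eq_zero hk0 hkn]
  simp

lemma exp_two_pi_I_mul_eq_exp_ofReal_mul_I (k s n : ℕ) :
    Complex.exp (2 * π * I * k * s / n) = Complex.exp ((2 * π * k * s / n : ℝ) * I) := by
  push_cast; ring_nf

lemma sum_Ioo_cos_eq_neg_one {n k : ℕ} (hk0 : 0 < k) (hkn : k < n) :
    ∑ s ∈ Ioo 0 n, cos (2 * π * k * s / n) = -1 := by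
  have h := congrArg Complex.re (sum_Ioo_exp_eq_neg_one hk0 hkn)
  simpa only [exp_two_pi_I_mul_eq_exp_ofReal_mul_I, Complex.re_sum, Complex.exp_ofReal_mul_I_re,
    Complex.neg_re, Complex.one_re] using h

lemma exp_add_exp_sub_eq_two_mul_cos {n s : ℕ} (k : ℕ) (hs : s ≤ n) :
    Complex.exp (2 * π * I * k * s / n) + Complex.exp (2 * π * I * k * (n - s : ℕ) / n) =
      2 * cos (2 * π * k * s / n) := by
  rcases Nat.eq_zero_or_pos n with rfl | hn
  · norm_num
  have hsub : 2 * π * I * k * (n - s : ℕ) / n =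
      k * (2 * π * I) + -((2 * π * k * s / n : ℝ) * I) := by
    have : (n : ℂ) ≠ 0 := by exact_mod_cast hn.ne'
    push_cast [Nat.cast_sub hs]; field_simp; ring
  rw [hsub, Complex.exp_add, Complex.exp_nat_mul_two_pi_mul_I, one_mul,
    exp_two_pi_I_mul_eq_exp_ofReal_mul_I, Complex.ofReal_cos, Complex.cos]
  ring_nf

lemma exp_le_one_add_add_sq {y : ℝ} (hy : |y| ≤ 1) : exp y ≤ 1 + y + y ^ 2 := by
  have h := Real.exp_bound hy (n := 2) (by norm_num)
  norm_num [Finset.sum_range_succ, Nat.factorial] at h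
  nlinarith [abs_le.mp h, sq_abs y]

lemma card_filter_le_mul_exp_le_sum_exp {α : Type*} (Ω : Finset α) (g : α → ℝ) (b : ℝ) :
    #{f ∈ Ω | b ≤ g f} * exp b ≤ ∑ f ∈ Ω, exp (g f) := by
  calc #{f ∈ Ω | b ≤ g f} * exp b = ∑ f ∈ Ω with b ≤ g f, exp b := by
        rw [sum_const, nsmul_eq_mul]
    _ ≤ ∑ f ∈ Ω with b ≤ g f, exp (g f) :=
        sum_le_sum fun f hf => exp_le_exp.mpr (mem_filter.mp hf).2
    _ ≤ ∑ f ∈ Ω, exp (g f) :=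
        sum_le_sum_of_subset_of_nonneg (filter_subset _ _) fun _ _ _ => (exp_pos _).le

section Chernoff

variable {ι α : Type*} [Fintype ι] [DecidableEq ι] {A : Finset α} {X : α → ℝ}

lemma sum_piFinset_exp_sum :
    ∑ f ∈ Fintype.piFinset (fun _ : ι => A), exp (∑ i, X (f i)) =
      (∑ s ∈ A, exp (X s)) ^ Fintype.card ι := by
  simp_rw [exp_sum]
  rw [sum_prod_piFinset A fun _ s => exp (X s), prod_const, card_univ]

lemma sum_exp_mul_le (hX : ∀ s ∈ A, |X s| ≤ 1) (hA : |∑ s ∈ A, X s| ≤ 1) (hAne : A.Nonempty)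
    {c : ℝ} (hc : |c| ≤ 1) :
    ∑ s ∈ A, exp (c * X s) ≤ #A * exp (|c| / #A + c ^ 2) := by
  have hN : (0 : ℝ) < #A := by exact_mod_cast hAne.card_pos
  calc ∑ s ∈ A, exp (c * X s) ≤ ∑ s ∈ A, (1 + c * X s + c ^ 2) := by
        refine sum_le_sum fun s hs => (exp_le_one_add_add_sq ?_).trans ?_
        · rw [abs_mul]; nlinarith [hX s hs, abs_nonneg c, abs_nonneg (X s)]
        · have : X s ^ 2 ≤ 1 := (sq_le_one_iff_abs_le_one _).mpr (hX s hs)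
          rw [mul_pow]; nlinarith [sq_nonneg c]
    _ = #A + c * ∑ s ∈ A, X s + #A * c ^ 2 := by
        rw [sum_add_distrib, sum_add_distrib, ← mul_sum]; simp
    _ ≤ #A * (1 + (|c| / #A + c ^ 2)) := by
        have : c * ∑ s ∈ A, X s ≤ |c| := by
          calc c * ∑ s ∈ A, X s ≤ |c * ∑ s ∈ A, X s| := le_abs_self _
            _ ≤ |c| := by rw [abs_mul]; exact mul_le_of_le_one_right (abs_nonneg c) hA
        field_simp; linarith
    _ ≤ #A * exp (|c| / #A + c ^ 2) := by
        gcongr; linarith [add_one_le_exp (|c| / #A + c ^ 2)]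

lemma card_upper_tail_le (hX : ∀ s ∈ A, |X s| ≤ 1) (hA : |∑ s ∈ A, X s| ≤ 1) {δ : ℝ}
    (hδ : δ ≤ 2) (hδA : 4 ≤ δ * #A) :
    (#{f ∈ Fintype.piFinset (fun _ : ι => A) | δ * Fintype.card ι ≤ ∑ i, X (f i)} : ℝ) ≤
      #A ^ Fintype.card ι * exp (-(Fintype.card ι * δ ^ 2 / 8)) := by
  set d := Fintype.card ι
  have hN : (0 : ℝ) < #A := by
    rcases (Nat.cast_nonneg #A : (0 : ℝ) ≤ #A).lt_or_eq with h | h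
    · exact h
    · rw [← h] at hδA; linarith
  have hδ0 : 0 < δ := pos_of_mul_pos_left (by linarith) hN.le
  set t := δ / 2 with ht_def
  have ht : |t| = t := abs_of_pos (by positivity)
  have hfilter : {f ∈ Fintype.piFinset (fun _ : ι => A) | δ * d ≤ ∑ i, X (f i)} =
      {f ∈ Fintype.piFinset (fun _ : ι => A) | t * (δ * d) ≤ ∑ i, t * X (f i)} := by
    refine filter_congr fun f _ => ?_
    rw [← mul_sum, mul_le_mul_iff_of_pos_left (by positivity)]
  have hmarkov := (card_filter_le_mul_exp_le_sum_exp (Fintype.piFinset (fun _ : ι => A))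
    (fun f => ∑ i, t * X (f i)) (t * (δ * d))).trans_eq
    (sum_piFinset_exp_sum (X := (t * X ·)))
  have hmgf : (∑ s ∈ A, exp (t * X s)) ^ d ≤ #A ^ d * exp (d * (t / #A + t ^ 2)) := by
    calc _ ≤ (#A * exp (|t| / #A + t ^ 2)) ^ d := pow_le_pow_left₀
          (sum_nonneg fun _ _ => (exp_pos _).le)
          (sum_exp_mul_le hX hA (card_pos.mp (by exact_mod_cast hN)) (by rw [ht]; linarith)) _
      _ = _ := by rw [ht, mul_pow, ← exp_nat_mul]
  have hexponent : d * (t / #A + t ^ 2) - t * (δ * d) ≤ -(d * δ ^ 2 / 8) := by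
    have : t / #A ≤ δ ^ 2 / 8 := by rw [div_le_iff₀ hN]; nlinarith
    rw [ht_def] at this ⊢
    nlinarith [mul_le_mul_of_nonneg_left this (Nat.cast_nonneg d)]
  rw [← hfilter, ← le_div_iff₀ (exp_pos _), div_eq_mul_inv, ← exp_neg] at hmarkov
  calc _ ≤ _ := hmarkov
    _ ≤ #A ^ d * exp (d * (t / #A + t ^ 2)) * exp (-(t * (δ * d))) := by gcongr
    _ ≤ _ := by
      rw [mul_assoc, ← exp_add]; gcongr; linarith

lemma card_tail_le (hX : ∀ s ∈ A, |X s| ≤ 1) (hA : |∑ s ∈ A, X s| ≤ 1) {δ : ℝ}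
    (hδ : δ ≤ 2) (hδA : 4 ≤ δ * #A) :
    (#{f ∈ Fintype.piFinset (fun _ : ι => A) | δ * Fintype.card ι < |∑ i, X (f i)|} : ℝ) ≤
      2 * #A ^ Fintype.card ι * exp (-(Fintype.card ι * δ ^ 2 / 8)) := by
  classical
  set Ω := Fintype.piFinset fun _ : ι => A
  have hX' : ∀ s ∈ A, |(-X) s| ≤ 1 := by simpa using hX
  have hA' : |∑ s ∈ A, (-X) s| ≤ 1 := by simpa [sum_neg_distrib] using hA
  have hsub : {f ∈ Ω | δ * Fintype.card ι < |∑ i, X (f i)|} ⊆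
      {f ∈ Ω | δ * Fintype.card ι ≤ ∑ i, X (f i)} ∪
      {f ∈ Ω | δ * Fintype.card ι ≤ ∑ i, (-X) (f i)} := by
    intro f
    simp only [mem_filter, mem_union, Pi.neg_apply, sum_neg_distrib]
    rintro ⟨hf, hlt⟩
    rcases le_abs'.mp hlt.le with h | h
    · exact Or.inr ⟨hf, by linarith⟩
    · exact Or.inl ⟨hf, h⟩
  calc _ ≤ (#{f ∈ Ω | δ * Fintype.card ι ≤ ∑ i, X (f i)} : ℝ) +
        #{f ∈ Ω | δ * Fintype.card ι ≤ ∑ i, (-X) (f i)} := by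
        exact_mod_cast (card_le_card hsub).trans (card_union_le _ _)
    _ ≤ _ := by
      linarith [card_upper_tail_le (ι := ι) hX hA hδ hδA,
        card_upper_tail_le (ι := ι) hX' hA' hδ hδA]

end Chernoff

lemma card_filter_piFinset_le_of_determined {ι α : Type*} [Fintype ι] [DecidableEq ι]
    (A : Finset α) (j : ι) {Q : (ι → α) → Prop} [DecidablePred Q]
    (hQ : ∀ f g, Q f → Q g → (∀ x ≠ j, f x = g x) → f j = g j) :
    #{f ∈ Fintype.piFinset (fun _ : ι => A) | Q f} ≤ #A ^ (Fintype.card ι - 1) := by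
  calc _ ≤ #(Fintype.piFinset fun _ : {x // x ≠ j} => A) := by
        refine card_le_card_of_injOn (fun f x => f x) (fun f hf => ?_) fun f hf g hg hfg => ?_
        · simp only [coe_filter, Set.mem_ofPred_eq, Fintype.mem_piFinset] at hf
          simpa using fun x _ => hf.1 x
        · simp only [coe_filter, Set.mem_ofPred_eq] at hf hg
          have hoff (x : ι) (hx : x ≠ j) : f x = g x := congrFun hfg ⟨x, hx⟩
          funext x
          by_cases hx : x = j
          · subst hx; exact hQ f g hf.2 hg.2 hoff
          · exact hoff x hx
    _ = _ := by
        rw [Fintype.card_piFinset, prod_const, card_univ, Fintype.card_subtype_compl,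
          Fintype.card_subtype_eq]

lemma one_le_logb_two_natCast {n : ℕ} (hn : 2 ≤ n) : 1 ≤ logb 2 n := by
  rw [le_logb_iff_rpow_le one_lt_two (by positivity), rpow_one]; exact_mod_cast hn

lemma cast_card_Ioo_zero {n : ℕ} (hn : 1 ≤ n) : (#(Ioo 0 n) : ℝ) = n - 1 := by
  rw [Nat.card_Ioo, Nat.sub_zero, Nat.cast_sub hn, Nat.cast_one]

noncomputable def spectrallyBadTuples (n d : ℕ) (ε : ℝ) : Finset (Fin d → ℕ) :=
  (Ioo 0 n).biUnion fun k => {f ∈ Fintype.piFinset (fun _ : Fin d => Ioo 0 n) |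
    ε * d < |∑ i, cos (2 * π * k * f i / n)|}

def collidingTuples (n d : ℕ) : Finset (Fin d → ℕ) :=
  (univ : Finset (Fin d × Fin d)).biUnion fun p =>
    {f ∈ Fintype.piFinset (fun _ : Fin d => Ioo 0 n) |
      f p.1 + f p.2 = n ∨ (p.1 ≠ p.2 ∧ f p.1 = f p.2)}

section RandomTuple

variable {n d : ℕ} {ε : ℝ}

lemma card_spectrallyBadTuples_le (hn : 2 ≤ n) (hε : ε ≤ 2) (hεn : 4 ≤ ε * (n - 1)) :
    (#(spectrallyBadTuples n d ε) : ℝ) ≤ 2 * (n - 1) ^ (d + 1) * exp (-(d * ε ^ 2 / 8)) := by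
  have hcard := cast_card_Ioo_zero (n := n) (by omega)
  calc _ ≤ ∑ k ∈ Ioo 0 n, (#{f ∈ Fintype.piFinset (fun _ : Fin d => Ioo 0 n) |
        ε * d < |∑ i, cos (2 * π * k * f i / n)|} : ℝ) := by exact_mod_cast card_biUnion_le
    _ ≤ ∑ k ∈ Ioo 0 n, 2 * ((n : ℝ) - 1) ^ d * exp (-(d * ε ^ 2 / 8)) := by
        refine sum_le_sum fun k hk => ?_
        have hk := mem_Ioo.mp hk
        have := card_tail_le (ι := Fin d) (A := Ioo 0 n) (fun s _ => abs_cos_le_one _)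
          (by rw [sum_Ioo_cos_eq_neg_one hk.1 hk.2]; norm_num) hε (by rwa [hcard])
        simpa only [Fintype.card_fin, hcard] using this
    _ = _ := by rw [sum_const, nsmul_eq_mul, hcard]; ring

lemma card_collidingTuples_le (hn : 2 ≤ n) :
    (#(collidingTuples n d) : ℝ) ≤ 2 * d ^ 2 * (n - 1) ^ (d - 1) := by
  have hcard := cast_card_Ioo_zero (n := n) (by omega)
  calc _ ≤ ∑ p : Fin d × Fin d, (#{f ∈ Fintype.piFinset (fun _ : Fin d => Ioo 0 n) |
        f p.1 + f p.2 = n ∨ (p.1 ≠ p.2 ∧ f p.1 = f p.2)} : ℝ) := by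
        exact_mod_cast card_biUnion_le
    _ ≤ ∑ _p : Fin d × Fin d, 2 * ((n : ℝ) - 1) ^ (d - 1) := by
        refine sum_le_sum fun ⟨i, j⟩ _ => ?_
        have hsum := card_filter_piFinset_le_of_determined (Ioo 0 n) j
          (Q := fun f : Fin d → ℕ => f i + f j = n) fun f g hf hg hoff => by
            by_cases hij : i = j
            · subst hij; omega
            · have := hoff i hij; omega
        have heq := card_filter_piFinset_le_of_determined (Ioo 0 n) j
          (Q := fun f : Fin d → ℕ => i ≠ j ∧ f i = f j) fun f g hf hg hoff => by
            have := hoff i hf.1; omega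
        rw [Fintype.card_fin, ← Nat.cast_le (α := ℝ), Nat.cast_pow, hcard] at hsum heq
        calc _ ≤ (#{f ∈ Fintype.piFinset (fun _ : Fin d => Ioo 0 n) | f i + f j = n} : ℝ) +
              #{f ∈ Fintype.piFinset (fun _ : Fin d => Ioo 0 n) | i ≠ j ∧ f i = f j} := by
              rw [filter_or]; exact_mod_cast card_union_le _ _
          _ ≤ _ := by linarith
    _ = _ := by
        rw [sum_const, card_univ, Fintype.card_prod, Fintype.card_fin, nsmul_eq_mul]
        push_cast; ring

lemma exists_tuple_cos_sum_le (hn : 2 ≤ n) (hε : ε ≤ 2) (hεn : 4 ≤ ε * (n - 1))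
    (hdn : 8 * d ^ 2 ≤ (n : ℝ) - 1) (hexp : 4 * ((n : ℝ) - 1) ≤ exp (d * ε ^ 2 / 8)) :
    ∃ f : Fin d → ℕ, (∀ i, f i ∈ Ioo 0 n) ∧ (∀ i j, f i + f j ≠ n) ∧ Function.Injective f ∧
      ∀ k ∈ Ioo 0 n, |∑ i, cos (2 * π * k * f i / n)| ≤ ε * d := by
  set Ω := Fintype.piFinset fun _ : Fin d => Ioo 0 n
  have hN : (1 : ℝ) ≤ n - 1 := by
    have : (2 : ℝ) ≤ n := by exact_mod_cast hn
    linarith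
  have hΩ : (#Ω : ℝ) = (n - 1) ^ d := by
    rw [Fintype.card_piFinset_const, Nat.cast_pow, cast_card_Ioo_zero (by omega)]
  have hspectral : 2 * ((n : ℝ) - 1) ^ (d + 1) * exp (-(d * ε ^ 2 / 8)) ≤ (n - 1) ^ d / 2 := by
    have : ((n : ℝ) - 1) * exp (-(d * ε ^ 2 / 8)) ≤ 1 / 4 := by
      rw [exp_neg, ← div_eq_mul_inv, div_le_iff₀ (exp_pos _)]; linarith
    rw [pow_succ]
    nlinarith [pow_pos (by linarith : (0 : ℝ) < n - 1) d]
  have hcollision : 2 * (d : ℝ) ^ 2 * (n - 1) ^ (d - 1) ≤ (n - 1) ^ d / 4 := by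
    rcases d with _ | d
    · simp
    · rw [Nat.add_sub_cancel, pow_succ ((n : ℝ) - 1) d]
      nlinarith [mul_le_mul_of_nonneg_right hdn (pow_nonneg (by linarith : (0 : ℝ) ≤ n - 1) d)]
  obtain ⟨f, hfΩ, hfgood⟩ := exists_mem_notMem_of_card_lt_card
    (s := spectrallyBadTuples n d ε ∪ collidingTuples n d) (t := Ω) <| by
    have := card_union_le (spectrallyBadTuples n d ε) (collidingTuples n d)
    rw [← Nat.cast_le (α := ℝ), Nat.cast_add] at this
    rw [← Nat.cast_lt (α := ℝ), hΩ]
    linarith [card_spectrallyBadTuples_le (d := d) hn hε hεn,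
      card_collidingTuples_le (d := d) hn, (by positivity : (0 : ℝ) < (n - 1) ^ d)]
  simp only [spectrallyBadTuples, collidingTuples, mem_union, mem_biUnion, mem_filter, not_or,
    not_exists, not_and, mem_univ, true_and] at hfgood
  obtain ⟨hspec, hcoll⟩ := hfgood
  exact ⟨f, Fintype.mem_piFinset.mp hfΩ, fun i j => (hcoll (i, j) hfΩ).1,
    fun i j h => by_contra fun hij => (hcoll (i, j) hfΩ).2 hij h,
    fun k hk => not_lt.mp (hspec k hk hfΩ)⟩

end RandomTuple

def IsCirculantExpander (n : ℕ) (η : ℝ) (S : Finset ℕ) : Prop :=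
  S ⊆ Ioo 0 n ∧ (∀ s ∈ Ioo 0 n, (s ∈ S ↔ n - s ∈ S)) ∧
    ∀ k ∈ Ioo 0 n, ‖∑ s ∈ S, Complex.exp (2 * π * I * (k : ℂ) * (s : ℂ) / (n : ℂ))‖ ≤ η * #S

section CirculantExpander

variable {n d : ℕ} {ε η : ℝ} {T : Finset ℕ}

lemma IsCirculantExpander.mono {S : Finset ℕ} (h : IsCirculantExpander n η S) {η' : ℝ}
    (hη : η ≤ η') : IsCirculantExpander n η' S :=
  ⟨h.1, h.2.1, fun k hk => (h.2.2 k hk).trans (by gcongr)⟩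

lemma isCirculantExpander_Ioo (hn : 2 ≤ n) : IsCirculantExpander n (1 / (n - 1)) (Ioo 0 n) := by
  refine ⟨subset_refl _, fun s hs => ?_, fun k hk => ?_⟩
  · simp only [mem_Ioo] at hs ⊢; omega
  · have hk := mem_Ioo.mp hk
    have : (1 : ℝ) < n := by exact_mod_cast (by omega : 1 < n)
    rw [sum_Ioo_exp_eq_neg_one hk.1 hk.2, cast_card_Ioo_zero (by omega), norm_neg, norm_one,
      one_div_mul_cancel (by linarith)]

lemma injOn_sub_of_subset_Ioo (hT : T ⊆ Ioo 0 n) : Set.InjOn (n - ·) T := by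
  intro a ha b hb hab
  have := mem_Ioo.mp (hT ha); have := mem_Ioo.mp (hT hb); simp only at hab; omega

lemma card_union_image_sub (hT : T ⊆ Ioo 0 n) (hdisj : Disjoint T (T.image (n - ·))) :
    #(T ∪ T.image (n - ·)) = 2 * #T := by
  rw [card_union_of_disjoint hdisj, card_image_of_injOn (injOn_sub_of_subset_Ioo hT), two_mul]

lemma isCirculantExpander_union_image_sub (hT : T ⊆ Ioo 0 n)
    (hdisj : Disjoint T (T.image (n - ·)))
    (hcos : ∀ k ∈ Ioo 0 n, |∑ s ∈ T, cos (2 * π * k * s / n)| ≤ η * #T) :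
    IsCirculantExpander n η (T ∪ T.image (n - ·)) := by
  refine ⟨union_subset hT fun s hs => ?_, fun s hs => ?_, fun k hk => ?_⟩
  · obtain ⟨t, ht, rfl⟩ := mem_image.mp hs
    have := mem_Ioo.mp (hT ht); simp only [mem_Ioo]; omega
  · have hs := mem_Ioo.mp hs
    simp only [mem_union, mem_image]
    constructor
    · rintro (h | ⟨t, ht, rfl⟩)
      · exact Or.inr ⟨s, h, rfl⟩
      · have := mem_Ioo.mp (hT ht); left; rwa [Nat.sub_sub_self this.2.le]
    · rintro (h | ⟨t, ht, hts⟩)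
      · exact Or.inr ⟨n - s, h, by omega⟩
      · have := mem_Ioo.mp (hT ht); left; rwa [← (by omega : t = s)]
  · rw [card_union_image_sub hT hdisj, sum_union hdisj, sum_image (injOn_sub_of_subset_Ioo hT),
      ← sum_add_distrib]
    rw [sum_congr rfl fun s hs => exp_add_exp_sub_eq_two_mul_cos k (mem_Ioo.mp (hT hs)).2.le,
      ← mul_sum, ← Complex.ofReal_sum, norm_mul, Complex.norm_real, norm_eq_abs,
      Complex.norm_two]
    push_cast
    linarith [hcos k hk]

lemma exists_isCirculantExpander_card_eq (hn : 2 ≤ n) (hε : ε ≤ 2) (hεn : 4 ≤ ε * (n - 1))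
    (hdn : 8 * d ^ 2 ≤ (n : ℝ) - 1) (hexp : 4 * ((n : ℝ) - 1) ≤ exp (d * ε ^ 2 / 8)) :
    ∃ S, IsCirculantExpander n ε S ∧ #S = 2 * d := by
  obtain ⟨f, hf, hsum, hinj, hcos⟩ := exists_tuple_cos_sum_le hn hε hεn hdn hexp
  have hT : univ.image f ⊆ Ioo 0 n := by simpa [subset_iff] using hf
  have hdisj : Disjoint (univ.image f) ((univ.image f).image (n - ·)) := by
    simp only [disjoint_left, mem_image, mem_univ, true_and, not_exists]
    rintro _ ⟨i, rfl⟩ _ ⟨⟨j, rfl⟩, hji⟩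
    have := mem_Ioo.mp (hf j)
    exact hsum i j (by omega)
  have hcard : #(univ.image f) = d := by
    rw [card_image_of_injective _ hinj, card_univ, Fintype.card_fin]
  refine ⟨_, isCirculantExpander_union_image_sub hT hdisj fun k hk => ?_, by
    rw [card_union_image_sub hT hdisj, hcard]⟩
  rw [sum_image fun i _ j _ h => hinj h, hcard]
  exact hcos k hk

lemma eventually_size_conditions (hε : 0 < ε) : ∀ᶠ n : ℕ in atTop,
    4 ≤ ε * (n - 1) ∧ 8 * (⌈16 * log n / ε ^ 2⌉₊ : ℝ) ^ 2 ≤ n - 1 := by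
  set a := 16 / ε ^ 2
  have hlittle : (fun x => 8 * (a * log x + 1) ^ 2 + 1) =o[atTop] id := by
    have h := ((isLittleO_pow_log_id_atTop (n := 2)).const_mul_left (8 * a ^ 2)).add
      ((isLittleO_log_id_atTop.const_mul_left (16 * a)).add (isLittleO_const_id_atTop (9 : ℝ)))
    refine h.congr_left fun x => ?_
    ring
  have hreal : ∀ᶠ x : ℝ in atTop, 4 ≤ ε * (x - 1) ∧ 8 * (a * log x + 1) ^ 2 ≤ x - 1 := by
    filter_upwards [hlittle.bound one_pos, eventually_ge_atTop (4 / ε + 1)] with x hx hx'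
    refine ⟨by rw [← div_le_iff₀' hε]; linarith, ?_⟩
    have hx0 : 0 < x := by linarith [div_pos four_pos hε]
    rw [norm_eq_abs, norm_eq_abs, one_mul, id, abs_of_pos hx0, abs_of_pos (by positivity)] at hx
    linarith
  filter_upwards [tendsto_natCast_atTop_atTop.eventually hreal] with n ⟨hεn, hn⟩
  refine ⟨hεn, le_trans ?_ hn⟩
  have hceil : (⌈16 * log n / ε ^ 2⌉₊ : ℝ) ≤ a * log n + 1 := by
    have := Nat.ceil_lt_add_one (by positivity : 0 ≤ 16 * log n / ε ^ 2)
    rw [show a * log n = 16 * log n / ε ^ 2 by ring]; exact this.le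
  gcongr

lemma four_mul_sub_one_le_exp_ceil (hn : 2 ≤ n) (hε : 0 < ε) :
    4 * ((n : ℝ) - 1) ≤ exp (⌈16 * log n / ε ^ 2⌉₊ * ε ^ 2 / 8) := by
  have hn0 : (0 : ℝ) < n := by positivity
  calc 4 * ((n : ℝ) - 1) ≤ exp (2 * log n) := by
        rw [two_mul, exp_add, exp_log hn0]
        nlinarith [sq_nonneg ((n : ℝ) - 2)]
    _ ≤ _ := by
        gcongr
        calc 2 * log n = 16 * log n / ε ^ 2 * ε ^ 2 / 8 := by field_simp; ring
          _ ≤ _ := by gcongr; exact Nat.le_ceil _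

lemma two_mul_ceil_le_mul_logb (hn : 2 ≤ n) (hε : 0 < ε) :
    2 * (⌈16 * log n / ε ^ 2⌉₊ : ℝ) ≤ (32 * log 2 / ε ^ 2 + 2) * logb 2 n := by
  have hlogb := one_le_logb_two_natCast hn
  have hceil := Nat.ceil_lt_add_one (by positivity : 0 ≤ 16 * log n / ε ^ 2)
  have hlog : log n = log 2 * logb 2 n := by
    rw [logb, mul_div_cancel₀ _ (log_pos one_lt_two).ne']
  calc 2 * (⌈16 * log n / ε ^ 2⌉₊ : ℝ) ≤ 2 * (16 * log n / ε ^ 2 + 1) := by linarith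
    _ = 32 * log 2 / ε ^ 2 * logb 2 n + 2 := by rw [hlog]; ring
    _ ≤ _ := by nlinarith

lemma eventually_exists_isCirculantExpander (hε0 : 0 < ε) (hε : ε ≤ 2) :
    ∀ᶠ n : ℕ in atTop, ∃ S : Finset ℕ, S.Nonempty ∧ IsCirculantExpander n ε S ∧
      #S ≤ (32 * log 2 / ε ^ 2 + 2) * logb 2 n := by
  filter_upwards [eventually_size_conditions hε0, eventually_ge_atTop 2] with n ⟨hεn, hdn⟩ hn
  obtain ⟨S, hS, hcard⟩ := exists_isCirculantExpander_card_eq hn hε hεn hdn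
    (four_mul_sub_one_le_exp_ceil hn hε0)
  have hd : 0 < ⌈16 * log n / ε ^ 2⌉₊ := Nat.ceil_pos.mpr (by
    have : (1 : ℝ) < n := by exact_mod_cast hn
    have := log_pos this
    positivity)
  refine ⟨S, card_pos.mp (by omega), hS, ?_⟩
  rw [hcard, Nat.cast_mul, Nat.cast_two]
  exact two_mul_ceil_le_mul_logb hn hε0

end CirculantExpander

theorem stmt_19 (ε : ℝ) (hε0 : 0 < ε) (hε1 : ε < 1) :
    ∃ C : ℝ, 0 < C ∧ ∀ n : ℕ, 2 ≤ n →
      ∃ S : Finset ℕ, S.Nonempty ∧ S ⊆ Finset.Ioo 0 n ∧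
        (∀ s ∈ Finset.Ioo 0 n, (s ∈ S ↔ n - s ∈ S)) ∧
        (S.card : ℝ) ≤ C * Real.logb 2 n ∧
        ∀ k ∈ Finset.Ioo 0 n,
          ‖∑ s ∈ S, Complex.exp
              (2 * Real.pi * Complex.I * (k : ℂ) * (s : ℂ) / (n : ℂ))‖ ≤
            max ε (1 / ((n : ℝ) - 1)) * S.card := by
  obtain ⟨n₀, hn₀⟩ :=
    eventually_atTop.mp (eventually_exists_isCirculantExpander hε0 (by linarith))
  set C := max ((n₀ : ℝ) + 1) (32 * log 2 / ε ^ 2 + 2)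
  refine ⟨C, by positivity, fun n hn => ?_⟩
  have hlogb := one_le_logb_two_natCast hn
  obtain ⟨S, hne, ⟨hsub, hsymm, hbound⟩, hcard⟩ : ∃ S : Finset ℕ, S.Nonempty ∧
      IsCirculantExpander n (max ε (1 / ((n : ℝ) - 1))) S ∧ #S ≤ C * logb 2 n := by
    rcases lt_or_ge n n₀ with hsmall | hlarge
    · refine ⟨Ioo 0 n, ⟨1, mem_Ioo.mpr (by omega)⟩,
        (isCirculantExpander_Ioo hn).mono (le_max_right _ _), ?_⟩
      rw [cast_card_Ioo_zero (by omega)]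
      have : (n : ℝ) ≤ n₀ := by exact_mod_cast hsmall.le
      nlinarith [le_max_left ((n₀ : ℝ) + 1) (32 * log 2 / ε ^ 2 + 2)]
    · obtain ⟨S, hne, hS, hcard⟩ := hn₀ n hlarge
      exact ⟨S, hne, hS.mono (le_max_left _ _),
        hcard.trans (by gcongr; exact le_max_right _ _)⟩
  exact ⟨S, hne, hsub, hsymm, hcard, hbound⟩
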